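/- arXiv:math/0010291 — 2 statements merged into one kernel-verified Lean document; each statement's English description precedes it below -/
import Mathlib

section
/- Let V : ℝ → ℝ be an even C² function with 0 ≤ V''(x) ≤ 1 for all x. Let μ be a probability measure on ℝ^Λ (Λ finite) with density proportional to exp[-(1/2) Σ_{x,y} p(x-y) V(φ_x - φ_y)] with zero boundary conditions outside Λ, where p is a symmetric probability kernel. Then for any x ∈ Λ and any A ⊆ Λ\{x}, the ratio Z_Λ(A ∪ {x}) / Z_Λ(A) = μ_Λ(|φ_x| ≤ a | |φ_z| ≤ a ∀z ∈ A) satisfies Z_Λ(A∪{x})/Z_Λ(A) ≤ 2a/√(2π). -/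
open MeasureTheory Real

/-- Extension of a configuration on a finite set `Λ` by zero boundary conditions. -/
noncomputable def extendBy {d : ℕ} (Λ : Finset (Fin d → ℤ))
    (φ : {x // x ∈ Λ} → ℝ) : (Fin d → ℤ) → ℝ :=
  fun x => if h : x ∈ Λ then φ ⟨x, h⟩ else 0

/-- The gradient Hamiltonian `(1/2) ∑_{x,y} p(x-y) V(ψ_x - ψ_y)` in the volume `Λ`
(only pairs touching `Λ` contribute; outside `Λ` the field is frozen to `0`). -/
noncomputable def hamiltonian {d : ℕ} (p : (Fin d → ℤ) → ℝ)
    (V : ℝ → ℝ) (Λ : Finset (Fin d → ℤ)) (ψ : (Fin d → ℤ) → ℝ) : ℝ :=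
  (1 / 2) * ∑' q : (Fin d → ℤ) × (Fin d → ℤ),
    if q.1 ∈ Λ ∨ q.2 ∈ Λ then p (q.1 - q.2) * V (ψ q.1 - ψ q.2) else 0

/-- The constrained partition function
`Z_Λ(A) = Z_Λ μ_Λ(|φ_z| ≤ a ∀ z ∈ A)`. -/
noncomputable def constrainedZ {d : ℕ} (p : (Fin d → ℤ) → ℝ) (V : ℝ → ℝ)
    (Λ : Finset (Fin d → ℤ)) (a : ℝ) (A : Finset (Fin d → ℤ)) : ℝ :=
  ∫ φ : {x // x ∈ Λ} → ℝ in {φ | ∀ z ∈ A, |extendBy Λ φ z| ≤ a},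
    Real.exp (-(hamiltonian p V Λ (extendBy Λ φ)))

/-!
Fix every spin but `φ_x` and write `H t` for the Hamiltonian with `φ_x = t`. Since `V'' ≤ 1`,
and the bonds at `x` carry total weight `∑_y (p (x - y) + p (y - x)) = 2`, which the prefactor
`1 / 2` compensates, the function `t ↦ t ^ 2 / 2 - H t` is convex. A supporting line at any `s`
puts `H` below a parabola of curvature `1` through `(s, H s)`, so
`∫ exp (-H) ≥ √(2π) exp (-H s)`: the conditional density of `φ_x` is at most `1 / √(2π)`.
Integrating this bound over `|φ_x| ≤ a`, and then over the other spins (the constraint on `A`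
does not involve `φ_x`), gives the claim.
-/

open Set ProbabilityTheory

theorem convexOn_sq_div_two_sub_of_iteratedDeriv_two_le_one {V : ℝ → ℝ} (hV : ContDiff ℝ 2 V)
    (hV'' : ∀ t, iteratedDeriv 2 V t ≤ 1) : ConvexOn ℝ univ (fun t => t ^ 2 / 2 - V t) := by
  have hV1 : Differentiable ℝ V := hV.differentiable (by norm_num)
  have hV2 : Differentiable ℝ (deriv V) :=
    ((contDiff_succ_iff_deriv (n := 1)).mp hV).2.2.differentiable (by norm_num)
  have hderiv : deriv (fun t => t ^ 2 / 2 - V t) = fun t => t - deriv V t := by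
    ext t
    have : HasDerivAt (fun t => t ^ 2 / 2 - V t) (t - deriv V t) t := by
      simpa using ((hasDerivAt_pow 2 t).div_const 2).fun_sub (hV1 t).hasDerivAt
    exact this.deriv
  refine convexOn_univ_of_deriv2_nonneg (fun t => ?_) ?_ fun t => ?_
  · exact ((differentiableAt_pow 2).div_const 2).sub (hV1 t)
  · rw [hderiv]
    exact differentiable_id.sub hV2
  · have h2 : iteratedDeriv 2 V = deriv (deriv V) := by
      rw [iteratedDeriv_succ, iteratedDeriv_one]
    have := ((hasDerivAt_id' t).fun_sub (hV2 t).hasDerivAt).deriv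
    simp only [Function.iterate_succ, Function.iterate_zero, Function.comp_apply, id, hderiv]
    rw [this]
    linarith [h2 ▸ hV'' t]

theorem ConvexOn.sq_div_two_sub_comp_sub {V : ℝ → ℝ}
    (hV : ConvexOn ℝ univ (fun t => t ^ 2 / 2 - V t)) (b : ℝ) :
    ConvexOn ℝ univ (fun t => t ^ 2 / 2 - V (t - b)) := by
  refine ⟨convex_univ, fun x _ y _ α β hα hβ hαβ => ?_⟩
  have h := hV.2 (mem_univ (x - b)) (mem_univ (y - b)) hα hβ hαβ
  have e : α * (x - b) + β * (y - b) = α * x + β * y - b := by linear_combination (-b) * hαβ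
  simp only [smul_eq_mul, e] at h ⊢
  linear_combination h + (b ^ 2 / 2) * hαβ

theorem convexOn_mul_sq_div_two_sub_const {c : ℝ} (hc : 0 ≤ c) (C : ℝ) :
    ConvexOn ℝ univ (fun t => c * (t ^ 2 / 2) - C) := by
  refine ⟨convex_univ, fun x _ y _ α β hα hβ hαβ => ?_⟩
  obtain rfl : β = 1 - α := by linarith
  simp only [smul_eq_mul]
  nlinarith [mul_nonneg (mul_nonneg hα hβ) (mul_nonneg hc (sq_nonneg (x - y)))]

theorem convexOn_tsum {ι E : Type*} [AddCommMonoid E] [Module ℝ E] {s : Set E}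
    (hs : Convex ℝ s) {f : ι → E → ℝ} (hf : ∀ i, ConvexOn ℝ s (f i))
    (hsum : ∀ x ∈ s, Summable fun i => f i x) : ConvexOn ℝ s (fun x => ∑' i, f i x) := by
  refine ⟨hs, fun x hx y hy a b ha hb hab => ?_⟩
  have hxy : a • x + b • y ∈ s := hs hx hy ha hb hab
  simp only [smul_eq_mul]
  rw [← tsum_mul_left, ← tsum_mul_left,
    ← ((hsum x hx).mul_left a).tsum_add ((hsum y hy).mul_left b)]
  exact (hsum _ hxy).tsum_le_tsum (fun i => (hf i).2 hx hy ha hb hab)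
    (((hsum x hx).mul_left a).add ((hsum y hy).mul_left b))

theorem ConvexOn.add_rightDeriv_mul_sub_le {f : ℝ → ℝ} (hf : ConvexOn ℝ univ f) (s t : ℝ) :
    f s + derivWithin f (Ioi s) s * (t - s) ≤ f t := by
  have hs : s ∈ interior univ := by simp
  rcases lt_trichotomy s t with hst | rfl | hts
  · have := hf.rightDeriv_le_slope_of_mem_interior hs (mem_univ t) hst
    rw [slope_def_field, le_div_iff₀ (sub_pos.mpr hst)] at this
    linarith
  · simp
  · have h1 := hf.slope_le_leftDeriv_of_mem_interior (mem_univ t) hs hts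
    have h2 := hf.leftDeriv_le_rightDeriv_of_mem_interior hs
    rw [slope_def_field, div_le_iff₀ (sub_pos.mpr hts)] at h1
    nlinarith

theorem ofReal_sqrt_two_pi_mul_exp_neg_le_lintegral {H : ℝ → ℝ}
    (hH : ConvexOn ℝ univ (fun t => t ^ 2 / 2 - H t)) (s : ℝ) :
    ENNReal.ofReal (√(2 * π) * exp (-H s)) ≤ ∫⁻ t, ENNReal.ofReal (exp (-H t)) := by
  set m := derivWithin (fun t => t ^ 2 / 2 - H t) (Ioi s) s
  -- The supporting line of `t ↦ t ^ 2 / 2 - H t` at `s` has slope `m`, which gives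
  -- `H t ≤ H s + (t - m) ^ 2 / 2 - (s - m) ^ 2 / 2`.
  have hgauss : ∀ t, √(2 * π) * exp (-H s) * gaussianPDFReal m 1 t ≤ exp (-H t) := by
    intro t
    have hsupp := hH.add_rightDeriv_mul_sub_le s t
    have hsqrt : √(2 * π) ≠ 0 := (sqrt_pos.mpr (by positivity)).ne'
    rw [gaussianPDFReal_def, NNReal.coe_one, mul_one, mul_assoc, mul_left_comm,
      mul_inv_cancel_left₀ hsqrt, ← exp_add, exp_le_exp]
    nlinarith [sq_nonneg (s - m)]
  calc ENNReal.ofReal (√(2 * π) * exp (-H s))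
      = ENNReal.ofReal (√(2 * π) * exp (-H s)) * ∫⁻ t, gaussianPDF m 1 t := by
        rw [lintegral_gaussianPDF_eq_one m one_ne_zero, mul_one]
    _ = ∫⁻ t, ENNReal.ofReal (√(2 * π) * exp (-H s) * gaussianPDFReal m 1 t) := by
        rw [← lintegral_const_mul' _ _ ENNReal.ofReal_ne_top]
        congr 1 with t
        rw [gaussianPDF, ← ENNReal.ofReal_mul (by positivity)]
    _ ≤ ∫⁻ t, ENNReal.ofReal (exp (-H t)) :=
        lintegral_mono fun t => ENNReal.ofReal_le_ofReal (hgauss t)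

theorem setLIntegral_Icc_exp_neg_le {H : ℝ → ℝ}
    (hH : ConvexOn ℝ univ (fun t => t ^ 2 / 2 - H t)) (a : ℝ) :
    ∫⁻ t in Icc (-a) a, ENNReal.ofReal (exp (-H t))
      ≤ ENNReal.ofReal (2 * a / √(2 * π)) * ∫⁻ t, ENNReal.ofReal (exp (-H t)) := by
  set I := ∫⁻ t, ENNReal.ofReal (exp (-H t))
  have hsqrt : 0 < √(2 * π) := sqrt_pos.mpr (by positivity)
  have hpt : ∀ s, ENNReal.ofReal (exp (-H s)) ≤ ENNReal.ofReal (√(2 * π))⁻¹ * I := by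
    intro s
    rw [ENNReal.ofReal_inv_of_pos hsqrt, ← ENNReal.div_eq_inv_mul,
      ENNReal.le_div_iff_mul_le (.inl (by simpa using hsqrt)) (.inl ENNReal.ofReal_ne_top),
      mul_comm, ← ENNReal.ofReal_mul hsqrt.le]
    exact ofReal_sqrt_two_pi_mul_exp_neg_le_lintegral hH s
  calc ∫⁻ t in Icc (-a) a, ENNReal.ofReal (exp (-H t))
      ≤ ∫⁻ _ in Icc (-a) a, ENNReal.ofReal (√(2 * π))⁻¹ * I := lintegral_mono hpt
    _ = ENNReal.ofReal (2 * a / √(2 * π)) * I := by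
        rw [setLIntegral_const, Real.volume_Icc, mul_right_comm, ← ENNReal.ofReal_mul
          (by positivity), sub_neg_eq_add, ← two_mul, inv_mul_eq_div]

theorem lintegral_pi_le_mul_of_forall_update {ι : Type*} [Fintype ι] [DecidableEq ι]
    {X : ι → Type*} [∀ i, MeasurableSpace (X i)] (μ : ∀ i, Measure (X i))
    [∀ i, SigmaFinite (μ i)] {f g : (∀ i, X i) → ENNReal} (hf : Measurable f)
    (hg : Measurable g) (i : ι) {c : ENNReal} (hc : c ≠ ⊤)
    (h : ∀ φ, ∫⁻ r, f (Function.update φ i r) ∂μ i ≤ c * ∫⁻ r, g (Function.update φ i r) ∂μ i) :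
    ∫⁻ φ, f φ ∂Measure.pi μ ≤ c * ∫⁻ φ, g φ ∂Measure.pi μ := by
  rcases isEmpty_or_nonempty (∀ i, X i) with hX | ⟨⟨φ₀⟩⟩
  · simp
  rw [lintegral_eq_lmarginal_univ φ₀, lintegral_eq_lmarginal_univ φ₀,
    lmarginal_erase' f hf (Finset.mem_univ i), lmarginal_erase' g hg (Finset.mem_univ i)]
  calc _ ≤ (∫⋯∫⁻_Finset.univ.erase i,
          (fun φ => c * ∫⁻ r, g (Function.update φ i r) ∂μ i) ∂μ) φ₀ := lmarginal_mono h φ₀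
    _ = _ := lintegral_const_mul' c _ hc

theorem integral_div_integral_le_of_lintegral_le {α : Type*} [MeasurableSpace α]
    {μ ν : Measure α} {f : α → ℝ} (hf₀ : 0 ≤ f) (hf : Measurable f) {c : ℝ} (hc : 0 ≤ c)
    (h : ∫⁻ x, ENNReal.ofReal (f x) ∂μ ≤ ENNReal.ofReal c * ∫⁻ x, ENNReal.ofReal (f x) ∂ν) :
    (∫ x, f x ∂μ) / (∫ x, f x ∂ν) ≤ c := by
  rw [integral_eq_lintegral_of_nonneg_ae (.of_forall hf₀) hf.aestronglyMeasurable,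
    integral_eq_lintegral_of_nonneg_ae (.of_forall hf₀) hf.aestronglyMeasurable]
  rcases eq_or_ne (∫⁻ x, ENNReal.ofReal (f x) ∂ν) ⊤ with hν | hν
  · simpa [hν] using hc
  refine div_le_of_le_mul₀ ENNReal.toReal_nonneg hc ?_
  calc (∫⁻ x, ENNReal.ofReal (f x) ∂μ).toReal
      ≤ (ENNReal.ofReal c * ∫⁻ x, ENNReal.ofReal (f x) ∂ν).toReal :=
        ENNReal.toReal_mono (ENNReal.mul_ne_top ENNReal.ofReal_ne_top hν) h
    _ = c * (∫⁻ x, ENNReal.ofReal (f x) ∂ν).toReal := by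
        rw [ENNReal.toReal_mul, ENNReal.toReal_ofReal hc]

section PairEnergy

variable {G : Type*} [AddGroup G] [DecidableEq G]

def pairEnergy (p : G → ℝ) (V : ℝ → ℝ) (Λ : Finset G) (ψ : G → ℝ) (q : G × G) : ℝ :=
  if q.1 ∈ Λ ∨ q.2 ∈ Λ then p (q.1 - q.2) * V (ψ q.1 - ψ q.2) else 0

def bondWeight (p : G → ℝ) (z : G) (q : G × G) : ℝ :=
  (if q.1 = z then p (q.1 - q.2) else 0) + (if q.2 = z then p (q.1 - q.2) else 0)

theorem hasSum_bondWeight {p : G → ℝ} {s : ℝ} (hp : HasSum p s) (z : G) :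
    HasSum (bondWeight p z) (s + s) := by
  have hfst : HasSum (fun q : G × G => if q.1 = z then p (q.1 - q.2) else 0) s := by
    refine ((Prod.mk_right_injective z).hasSum_iff ?_).mp ?_
    · rintro ⟨z', w⟩ h
      have : z' ≠ z := by rintro rfl; exact h ⟨w, rfl⟩
      simp [this]
    · simpa [Function.comp_def] using (Equiv.subLeft z).hasSum_iff.mpr hp
  have hsnd : HasSum (fun q : G × G => if q.2 = z then p (q.1 - q.2) else 0) s := by
    refine ((Prod.mk_left_injective z).hasSum_iff ?_).mp ?_
    · rintro ⟨z', w⟩ h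
      have : w ≠ z := by rintro rfl; exact h ⟨z', rfl⟩
      simp [this]
    · simpa [Function.comp_def] using (Equiv.subRight z).hasSum_iff.mpr hp
  exact hfst.add hsnd

theorem bondWeight_nonneg {p : G → ℝ} (hp₀ : ∀ x, 0 ≤ p x) (z : G) (q : G × G) :
    0 ≤ bondWeight p z q := by
  unfold bondWeight
  split_ifs <;> simp [hp₀]

theorem le_sum_bondWeight {p : G → ℝ} (hp₀ : ∀ x, 0 ≤ p x) {Λ : Finset G} {q : G × G}
    (hq : q.1 ∈ Λ ∨ q.2 ∈ Λ) : p (q.1 - q.2) ≤ ∑ z ∈ Λ, bondWeight p z q := by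
  rcases hq with h | h <;>
  · refine le_trans ?_ (Finset.single_le_sum (fun z _ => bondWeight_nonneg hp₀ z q) h)
    simp only [bondWeight, if_true]
    split_ifs <;> simp [hp₀]

theorem summable_pairEnergy {p : G → ℝ} (hp₀ : ∀ x, 0 ≤ p x) (hp : Summable p) (V : ℝ → ℝ)
    (Λ : Finset G) {ψ : G → ℝ} (hψ : (range ψ).Finite) : Summable (pairEnergy p V Λ ψ) := by
  obtain ⟨M, hM⟩ : BddAbove (range fun q : G × G => |V (ψ q.1 - ψ q.2)|) :=
    ((hψ.image2 (fun u v => |V (u - v)|) hψ).subset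
      (by rintro _ ⟨q, rfl⟩
          exact mem_image2_of_mem (mem_range_self _) (mem_range_self _))).bddAbove
  have hM' : ∀ q : G × G, |V (ψ q.1 - ψ q.2)| ≤ M := fun q => hM (mem_range_self q)
  refine Summable.of_norm_bounded ((summable_sum (s := Λ) fun z _ =>
    (hasSum_bondWeight hp.hasSum z).summable).mul_left M) fun q => ?_
  have hM₀ : 0 ≤ M := (abs_nonneg _).trans (hM' q)
  unfold pairEnergy
  split_ifs with hq
  · rw [norm_mul, Real.norm_of_nonneg (hp₀ _), Real.norm_eq_abs, mul_comm]
    exact mul_le_mul (hM' q) (le_sum_bondWeight hp₀ hq) (hp₀ _) hM₀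
  · simpa using mul_nonneg hM₀ (Finset.sum_nonneg fun z _ => bondWeight_nonneg hp₀ z q)

theorem convexOn_bondWeight_mul_sub_pairEnergy_update {p : G → ℝ} (hp₀ : ∀ x, 0 ≤ p x)
    {V : ℝ → ℝ} (hV_even : ∀ t, V (-t) = V t) (hV : ConvexOn ℝ univ (fun t => t ^ 2 / 2 - V t))
    {Λ : Finset G} {x : G} (hx : x ∈ Λ) (ψ : G → ℝ) (q : G × G) :
    ConvexOn ℝ univ
      (fun t => bondWeight p x q * (t ^ 2 / 2) - pairEnergy p V Λ (Function.update ψ x t) q) := by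
  obtain ⟨z, w⟩ := q
  by_cases hz : z = x <;> by_cases hw : w = x
  · subst hz hw
    simpa [bondWeight, pairEnergy, hx] using
      convexOn_mul_sq_div_two_sub_const (add_nonneg (hp₀ 0) (hp₀ 0)) (p 0 * V 0)
  · subst hz
    simpa [bondWeight, pairEnergy, hx, hw, mul_sub] using
      (hV.sq_div_two_sub_comp_sub (ψ w)).smul (hp₀ (z - w))
  · subst hw
    have := (hV.sq_div_two_sub_comp_sub (ψ z)).smul (hp₀ (z - w))
    simp_rw [← hV_even (_ - ψ z), neg_sub] at this
    simpa [bondWeight, pairEnergy, hx, hz, mul_sub] using this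
  · simpa [bondWeight, pairEnergy, hz, hw] using
      convexOn_mul_sq_div_two_sub_const le_rfl (pairEnergy p V Λ ψ (z, w))

theorem convexOn_sq_div_two_sub_tsum_pairEnergy_update {p : G → ℝ} (hp₀ : ∀ x, 0 ≤ p x)
    (hp : HasSum p 1) {V : ℝ → ℝ} (hV_even : ∀ t, V (-t) = V t)
    (hV : ConvexOn ℝ univ (fun t => t ^ 2 / 2 - V t)) {Λ : Finset G} {x : G} (hx : x ∈ Λ)
    {ψ : G → ℝ} (hψ : (range ψ).Finite) :
    ConvexOn ℝ univ
      (fun t => t ^ 2 / 2 - 1 / 2 * ∑' q, pairEnergy p V Λ (Function.update ψ x t) q) := by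
  have hsum : ∀ t, Summable (pairEnergy p V Λ (Function.update ψ x t)) := fun t =>
    summable_pairEnergy hp₀ hp.summable V Λ <| (hψ.insert t).subset <| by
      rintro _ ⟨y, rfl⟩
      rw [Function.update_apply]
      split_ifs <;> simp
  have hsplit : ∀ t, t ^ 2 / 2 - 1 / 2 * ∑' q, pairEnergy p V Λ (Function.update ψ x t) q
      = ∑' q, 1 / 2 * (bondWeight p x q * (t ^ 2 / 2)
          - pairEnergy p V Λ (Function.update ψ x t) q) := by
    intro t
    rw [((((hasSum_bondWeight hp x).mul_right (t ^ 2 / 2)).sub (hsum t).hasSum).mul_left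
      (1 / 2)).tsum_eq]
    ring
  have hterm : ∀ q, ConvexOn ℝ univ fun t => 1 / 2 * (bondWeight p x q * (t ^ 2 / 2)
      - pairEnergy p V Λ (Function.update ψ x t) q) := fun q =>
    (convexOn_bondWeight_mul_sub_pairEnergy_update hp₀ hV_even hV hx ψ q).smul (by norm_num)
  simp_rw [hsplit]
  exact convexOn_tsum convex_univ hterm fun t _ =>
    (((hasSum_bondWeight hp x).mul_right (t ^ 2 / 2)).summable.sub (hsum t)).mul_left (1 / 2)

end PairEnergy

section Lattice

variable {d : ℕ}

theorem hamiltonian_eq_tsum_pairEnergy (p : (Fin d → ℤ) → ℝ) (V : ℝ → ℝ)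
    (Λ : Finset (Fin d → ℤ)) (ψ : (Fin d → ℤ) → ℝ) :
    hamiltonian p V Λ ψ = 1 / 2 * ∑' q, pairEnergy p V Λ ψ q := rfl

theorem extendBy_update {Λ : Finset (Fin d → ℤ)} {x : Fin d → ℤ} (hx : x ∈ Λ)
    (φ : {x // x ∈ Λ} → ℝ) (r : ℝ) :
    extendBy Λ (Function.update φ ⟨x, hx⟩ r) = Function.update (extendBy Λ φ) x r := by
  ext z
  by_cases hz : z ∈ Λ
  · simp [extendBy, hz, Function.update_apply, Subtype.ext_iff]
  · simp [extendBy, hz, show z ≠ x by rintro rfl; exact hz hx]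

theorem finite_range_extendBy (Λ : Finset (Fin d → ℤ)) (φ : {x // x ∈ Λ} → ℝ) :
    (range (extendBy Λ φ)).Finite :=
  ((finite_range φ).insert 0).subset <| by
    rintro _ ⟨z, rfl⟩
    unfold extendBy
    split_ifs <;> simp

theorem continuous_extendBy_apply (Λ : Finset (Fin d → ℤ)) (z : Fin d → ℤ) :
    Continuous fun φ : {x // x ∈ Λ} → ℝ => extendBy Λ φ z := by
  unfold extendBy
  split_ifs
  exacts [continuous_apply _, continuous_const]

noncomputable def boltzmannWeight (p : (Fin d → ℤ) → ℝ) (V : ℝ → ℝ) (Λ : Finset (Fin d → ℤ))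
    (φ : {x // x ∈ Λ} → ℝ) : ℝ :=
  exp (-hamiltonian p V Λ (extendBy Λ φ))

theorem measurable_boltzmannWeight (p : (Fin d → ℤ) → ℝ) {V : ℝ → ℝ} (hV : Continuous V)
    (Λ : Finset (Fin d → ℤ)) : Measurable (boltzmannWeight p V Λ) := by
  refine measurable_exp.comp (Measurable.neg (Measurable.const_mul ?_ _))
  refine Measurable.tsum fun q => ?_
  split_ifs
  · exact measurable_const.mul (hV.comp ((continuous_extendBy_apply Λ q.1).sub
      (continuous_extendBy_apply Λ q.2))).measurable
  · exact measurable_const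

def pinnedSet (Λ : Finset (Fin d → ℤ)) (a : ℝ) (B : Finset (Fin d → ℤ)) :
    Set ({x // x ∈ Λ} → ℝ) :=
  {φ | ∀ z ∈ B, |extendBy Λ φ z| ≤ a}

theorem constrainedZ_eq (p : (Fin d → ℤ) → ℝ) (V : ℝ → ℝ) (Λ : Finset (Fin d → ℤ)) (a : ℝ)
    (B : Finset (Fin d → ℤ)) :
    constrainedZ p V Λ a B = ∫ φ in pinnedSet Λ a B, boltzmannWeight p V Λ φ := rfl

theorem measurableSet_pinnedSet (Λ : Finset (Fin d → ℤ)) (a : ℝ) (B : Finset (Fin d → ℤ)) :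
    MeasurableSet (pinnedSet Λ a B) := by
  have : pinnedSet Λ a B = ⋂ z ∈ B, {φ | |extendBy Λ φ z| ≤ a} := by
    ext; simp [pinnedSet]
  rw [this]
  exact Finset.measurableSet_biInter B fun z _ =>
    measurableSet_le (continuous_extendBy_apply Λ z).abs.measurable measurable_const

theorem update_mem_pinnedSet_iff {Λ : Finset (Fin d → ℤ)} {x : Fin d → ℤ} (hx : x ∈ Λ)
    {a : ℝ} {B : Finset (Fin d → ℤ)} (hxB : x ∉ B) (φ : {x // x ∈ Λ} → ℝ) (r : ℝ) :
    Function.update φ ⟨x, hx⟩ r ∈ pinnedSet Λ a B ↔ φ ∈ pinnedSet Λ a B := by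
  simp only [pinnedSet, mem_ofPred_eq, extendBy_update]
  exact forall₂_congr fun z hz => by rw [Function.update_of_ne (ne_of_mem_of_not_mem hz hxB)]

theorem update_mem_pinnedSet_insert_iff {Λ : Finset (Fin d → ℤ)} {x : Fin d → ℤ} (hx : x ∈ Λ)
    {a : ℝ} {B : Finset (Fin d → ℤ)} (hxB : x ∉ B) (φ : {x // x ∈ Λ} → ℝ) (r : ℝ) :
    Function.update φ ⟨x, hx⟩ r ∈ pinnedSet Λ a (insert x B)
      ↔ r ∈ Icc (-a) a ∧ φ ∈ pinnedSet Λ a B := by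
  rw [← update_mem_pinnedSet_iff hx hxB φ r]
  simp only [pinnedSet, mem_ofPred_eq, Finset.forall_mem_insert, extendBy_update,
    Function.update_self, abs_le, mem_Icc]

theorem lintegral_update_indicator_pinnedSet_insert_le {p : (Fin d → ℤ) → ℝ}
    (hp₀ : ∀ x, 0 ≤ p x) (hp : HasSum p 1) {V : ℝ → ℝ} (hV_even : ∀ t, V (-t) = V t)
    (hV : ConvexOn ℝ univ (fun t => t ^ 2 / 2 - V t)) {Λ : Finset (Fin d → ℤ)}
    {x : Fin d → ℤ} (hx : x ∈ Λ) (a : ℝ) {B : Finset (Fin d → ℤ)} (hxB : x ∉ B)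
    (φ : {x // x ∈ Λ} → ℝ) :
    ∫⁻ r, (pinnedSet Λ a (insert x B)).indicator
        (fun φ => ENNReal.ofReal (boltzmannWeight p V Λ φ)) (Function.update φ ⟨x, hx⟩ r)
      ≤ ENNReal.ofReal (2 * a / √(2 * π)) * ∫⁻ r, (pinnedSet Λ a B).indicator
        (fun φ => ENNReal.ofReal (boltzmannWeight p V Λ φ)) (Function.update φ ⟨x, hx⟩ r) := by
  by_cases hφ : φ ∈ pinnedSet Λ a B
  · have hins : ∀ r, (pinnedSet Λ a (insert x B)).indicator
          (fun φ => ENNReal.ofReal (boltzmannWeight p V Λ φ)) (Function.update φ ⟨x, hx⟩ r)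
        = (Icc (-a) a).indicator
          (fun r => ENNReal.ofReal (boltzmannWeight p V Λ (Function.update φ ⟨x, hx⟩ r))) r := by
      intro r
      simp only [indicator, update_mem_pinnedSet_insert_iff hx hxB, hφ, and_true]
    have hB : ∀ r, (pinnedSet Λ a B).indicator
          (fun φ => ENNReal.ofReal (boltzmannWeight p V Λ φ)) (Function.update φ ⟨x, hx⟩ r)
        = ENNReal.ofReal (boltzmannWeight p V Λ (Function.update φ ⟨x, hx⟩ r)) := fun r =>
      indicator_of_mem ((update_mem_pinnedSet_iff hx hxB φ r).2 hφ) _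
    simp_rw [hins, hB, lintegral_indicator measurableSet_Icc, boltzmannWeight, extendBy_update hx,
      hamiltonian_eq_tsum_pairEnergy]
    exact setLIntegral_Icc_exp_neg_le (convexOn_sq_div_two_sub_tsum_pairEnergy_update hp₀ hp
      hV_even hV hx (finite_range_extendBy Λ φ)) a
  · simp [indicator, update_mem_pinnedSet_insert_iff hx hxB, hφ]

end Lattice

theorem pinned_partition_ratio_le_general {d : ℕ} (p : (Fin d → ℤ) → ℝ) (V : ℝ → ℝ)
    (hp_nonneg : ∀ x, 0 ≤ p x)
    (hp_sum : ∑' x, p x = 1)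
    (hV_even : ∀ t, V (-t) = V t) (hV_smooth : ContDiff ℝ 2 V)
    (hV''_le_one : ∀ t, iteratedDeriv 2 V t ≤ 1)
    (Λ : Finset (Fin d → ℤ)) (a : ℝ) (ha : 0 < a)
    (x : Fin d → ℤ) (hx : x ∈ Λ) (A : Finset (Fin d → ℤ))
    (hA : A ⊆ Λ.erase x) :
    constrainedZ p V Λ a (insert x A) / constrainedZ p V Λ a A
      ≤ 2 * a / Real.sqrt (2 * Real.pi) := by
  have hp : HasSum p 1 := by
    by_cases hs : Summable p
    · exact hp_sum ▸ hs.hasSum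
    · simp [tsum_eq_zero_of_not_summable hs] at hp_sum
  have hV := convexOn_sq_div_two_sub_of_iteratedDeriv_two_le_one hV_smooth hV''_le_one
  have hxA : x ∉ A := fun h => Finset.notMem_erase x Λ (hA h)
  have hmeas := measurable_boltzmannWeight p hV_smooth.continuous Λ
  rw [constrainedZ_eq, constrainedZ_eq]
  refine integral_div_integral_le_of_lintegral_le (fun φ => (exp_pos _).le) hmeas
    (by positivity) ?_
  rw [← lintegral_indicator (measurableSet_pinnedSet Λ a _),
    ← lintegral_indicator (measurableSet_pinnedSet Λ a _)]
  exact lintegral_pi_le_mul_of_forall_update (fun _ => volume)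
    (hmeas.ennreal_ofReal.indicator (measurableSet_pinnedSet Λ a _))
    (hmeas.ennreal_ofReal.indicator (measurableSet_pinnedSet Λ a _)) ⟨x, hx⟩
    ENNReal.ofReal_ne_top
    (lintegral_update_indicator_pinnedSet_insert_le hp_nonneg hp hV_even hV hx a hxA)

/-- For an even `C²` interaction `V` with `0 ≤ V'' ≤ 1` and a symmetric
probability kernel `p`, the conditional probability of pinning one more site satisfies
`Z_Λ(A ∪ {x}) / Z_Λ(A) ≤ 2a / √(2π)`. -/
theorem pinned_partition_ratio_le {d : ℕ} (p : (Fin d → ℤ) → ℝ) (V : ℝ → ℝ)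
    (hp_nonneg : ∀ x, 0 ≤ p x) (hp_symm : ∀ x, p (-x) = p x)
    (hp_sum : ∑' x, p x = 1)
    (hV_even : ∀ t, V (-t) = V t) (hV_smooth : ContDiff ℝ 2 V)
    (hV''_nonneg : ∀ t, 0 ≤ iteratedDeriv 2 V t)
    (hV''_le_one : ∀ t, iteratedDeriv 2 V t ≤ 1)
    (Λ : Finset (Fin d → ℤ)) (a : ℝ) (ha : 0 < a)
    (x : Fin d → ℤ) (hx : x ∈ Λ) (A : Finset (Fin d → ℤ))
    (hA : A ⊆ Λ.erase x) :
    constrainedZ p V Λ a (insert x A) / constrainedZ p V Λ a A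
      ≤ 2 * a / Real.sqrt (2 * Real.pi) :=
  pinned_partition_ratio_le_general p V hp_nonneg hp_sum hV_even hV_smooth hV''_le_one Λ a ha x hx A
    hA
end

section
/- In the one-dimensional δ-pinning model with nearest-neighbor Gaussian-type interaction, let f(k) = ψ_k(0) ~ 1/√(2πk) be the tied-down return density, and for ε > 0 let λ(ε) > 0 be the unique solution of ε Σ_k e^{−λk} f(k) = 1. Then λ(ε) = ε²/2 + o(ε²) as ε → 0. -/
/-!
Put `F(λ) = ∑_{k ≥ 0} e^{-λ(k+1)} f(k+1)` and `H(x) = e^{-x}/√x`, so that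
`√λ F(λ) = ∑_k λ H(λ(k+1)) · √(k+1) f(k+1)`. As `H` is decreasing, the weights `λ H(λ(k+1))`
are a Riemann sum for `∫_0^∞ H = Γ(1/2) = √π`, and each single weight vanishes as `λ → 0⁺`;
since `√(k+1) f(k+1) → (2π)^{-1/2}`, the weighted sum tends to `√π (2π)^{-1/2} = 1/√2`.
Finally `F` is decreasing with `F(λ(ε)) = 1/ε → ∞`, so `λ(ε) → 0⁺`, whence `√λ(ε)/ε → 1/√2`.
-/

open Filter Topology Set MeasureTheory

section RiemannSum

variable {H : ℝ → ℝ} {l : ℝ}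

theorem AntitoneOn.mul_comp_mul_left (hH : AntitoneOn H (Ioi 0)) (hl : 0 < l) :
    AntitoneOn (fun x => l * H (l * x)) (Ioi 0) := fun _ hx _ hy hxy =>
  mul_le_mul_of_nonneg_left
    (hH (mul_pos hl hx) (mul_pos hl hy) (mul_le_mul_of_nonneg_left hxy hl.le)) hl.le

theorem integral_mul_comp_mul_left (hl : 0 < l) (n : ℕ) :
    ∫ x in (1 : ℝ)..1 + n, l * H (l * x) = ∫ x in l..l * (1 + n), H x := by
  rw [intervalIntegral.integral_const_mul, intervalIntegral.integral_comp_mul_left H hl.ne',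
    smul_eq_mul, mul_one, ← mul_assoc, mul_inv_cancel₀ hl.ne', one_mul]

theorem integral_le_sum_mul_comp_mul_left (hH : AntitoneOn H (Ioi 0)) (hl : 0 < l) (n : ℕ) :
    ∫ x in l..l * (1 + n), H x ≤ ∑ k ∈ Finset.range n, l * H (l * (k + 1)) := by
  rw [← integral_mul_comp_mul_left hl]
  convert (hH.mul_comp_mul_left hl |>.mono fun x hx => one_pos.trans_le hx.1).integral_le_sum
    using 4 with k
  ring

theorem sum_le_integral_mul_comp_mul_left (hH : AntitoneOn H (Ioi 0)) (hl : 0 < l) (n : ℕ) :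
    ∑ k ∈ Finset.range n, l * H (l * (k + 2)) ≤ ∫ x in l..l * (1 + n), H x := by
  rw [← integral_mul_comp_mul_left hl]
  convert (hH.mul_comp_mul_left hl |>.mono fun x hx => one_pos.trans_le hx.1).sum_le_integral
    using 4 with k
  push_cast; ring

theorem sum_range_mul_comp_mul_le (hH : AntitoneOn H (Ioi 0)) (hH0 : ∀ x ∈ Ioi 0, 0 ≤ H x)
    (hint : IntegrableOn H (Ioi l)) (hl : 0 < l) (n : ℕ) :
    ∑ k ∈ Finset.range n, l * H (l * (k + 1)) ≤ l * H l + ∫ x in Ioi l, H x := by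
  have hterm : ∀ k : ℕ, 0 ≤ l * H (l * (k + 1)) := fun k =>
    mul_nonneg hl.le (hH0 _ (mem_Ioi.2 (by positivity)))
  have htail : ∫ x in l..l * (1 + n), H x ≤ ∫ x in Ioi l, H x := by
    rw [intervalIntegral.integral_of_le (le_mul_of_one_le_right hl.le (by simp))]
    exact setIntegral_mono_set hint
      ((ae_restrict_iff' measurableSet_Ioi).2 (.of_forall fun x hx => hH0 x (hl.trans hx)))
      Ioc_subset_Ioi_self.eventuallyLE
  -- the term `k = 0` is kept apart, as `H` may be unbounded near `0`
  calc ∑ k ∈ Finset.range n, l * H (l * (k + 1))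
      ≤ ∑ k ∈ Finset.range (n + 1), l * H (l * (k + 1)) :=
        Finset.sum_le_sum_of_subset_of_nonneg (by simp) fun k _ _ => hterm k
    _ = ∑ k ∈ Finset.range n, l * H (l * (k + 2)) + l * H l := by
        rw [Finset.sum_range_succ']; norm_num [add_assoc]
    _ ≤ l * H l + ∫ x in Ioi l, H x := by
        linarith [sum_le_integral_mul_comp_mul_left hH hl n]

theorem summable_mul_comp_mul (hH : AntitoneOn H (Ioi 0)) (hH0 : ∀ x ∈ Ioi 0, 0 ≤ H x)
    (hint : IntegrableOn H (Ioi l)) (hl : 0 < l) :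
    Summable fun k : ℕ => l * H (l * (k + 1)) :=
  summable_of_sum_range_le (fun k => mul_nonneg hl.le (hH0 _ (mem_Ioi.2 (by positivity))))
    (sum_range_mul_comp_mul_le hH hH0 hint hl)

theorem integral_Ioi_le_tsum_mul_comp_mul (hH : AntitoneOn H (Ioi 0))
    (hH0 : ∀ x ∈ Ioi 0, 0 ≤ H x) (hint : IntegrableOn H (Ioi l)) (hl : 0 < l) :
    ∫ x in Ioi l, H x ≤ ∑' k : ℕ, l * H (l * (k + 1)) := by
  have hlim : Tendsto (fun n : ℕ => l * (1 + n)) atTop atTop :=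
    (tendsto_atTop_add_const_left _ 1 tendsto_natCast_atTop_atTop).const_mul_atTop hl
  refine le_of_tendsto' (intervalIntegral_tendsto_integral_Ioi l hint hlim) fun n =>
    (integral_le_sum_mul_comp_mul_left hH hl n).trans ?_
  exact (summable_mul_comp_mul hH hH0 hint hl).sum_le_tsum _ fun k _ =>
    mul_nonneg hl.le (hH0 _ (mem_Ioi.2 (by positivity)))

theorem mul_le_integral_of_antitoneOn (hH : AntitoneOn H (Ioi 0))
    (hint : IntegrableOn H (Ioc 0 l)) (hl : 0 < l) :
    l * H l ≤ ∫ x in (0 : ℝ)..l, H x := by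
  rw [intervalIntegral.integral_of_le hl.le]
  have := setIntegral_mono_on (integrableOn_const (C := H l) measure_Ioc_lt_top.ne) hint
    measurableSet_Ioc fun x hx => hH hx.1 (hx.1.trans_le hx.2) hx.2
  simpa [Real.volume_real_Ioc_of_le hl.le] using this

theorem tendsto_intervalIntegral_zero_nhdsGT_zero (hint : IntegrableOn H (Ioi 0)) :
    Tendsto (fun l => ∫ x in (0 : ℝ)..l, H x) (𝓝[>] 0) (𝓝 0) := by
  have hcont := intervalIntegral.continuousOn_primitive_interval (a := 0) (b := 1)
    (μ := volume) (f := H) ?_ 0 left_mem_uIcc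
  · simpa using hcont.tendsto.mono_left <| by
      rw [← nhdsWithin_Ioo_eq_nhdsGT one_pos]
      exact nhdsWithin_mono _ (Ioo_subset_Icc_self.trans (by simp))
  · rw [uIcc_of_le zero_le_one, integrableOn_Icc_iff_integrableOn_Ioc]
    exact hint.mono_set Ioc_subset_Ioi_self

theorem tsum_mul_comp_mul_mem_Icc (hH : AntitoneOn H (Ioi 0)) (hH0 : ∀ x ∈ Ioi 0, 0 ≤ H x)
    (hint : IntegrableOn H (Ioi 0)) (hl : 0 < l) :
    ∑' k : ℕ, l * H (l * (k + 1)) ∈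
      Icc ((∫ x in Ioi 0, H x) - ∫ x in (0 : ℝ)..l, H x) (∫ x in Ioi 0, H x) := by
  have hint_l := hint.mono_set (Ioi_subset_Ioi hl.le)
  have hsplit := intervalIntegral.integral_Ioi_sub_Ioi hint hl.le
  refine ⟨by linarith [integral_Ioi_le_tsum_mul_comp_mul hH hH0 hint_l hl],
    Real.tsum_le_of_sum_range_le
      (fun k => mul_nonneg hl.le (hH0 _ (mem_Ioi.2 (by positivity)))) fun n => ?_⟩
  have := mul_le_integral_of_antitoneOn hH (hint.mono_set Ioc_subset_Ioi_self) hl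
  linarith [sum_range_mul_comp_mul_le hH hH0 hint_l hl n]

theorem tendsto_tsum_mul_comp_mul (hH : AntitoneOn H (Ioi 0)) (hH0 : ∀ x ∈ Ioi 0, 0 ≤ H x)
    (hint : IntegrableOn H (Ioi 0)) :
    Tendsto (fun l => ∑' k : ℕ, l * H (l * (k + 1))) (𝓝[>] 0) (𝓝 (∫ x in Ioi 0, H x)) := by
  have hlower := (tendsto_intervalIntegral_zero_nhdsGT_zero hint).const_sub (∫ x in Ioi 0, H x)
  rw [sub_zero] at hlower
  refine tendsto_of_tendsto_of_tendsto_of_le_of_le' hlower tendsto_const_nhds ?_ ?_ <;>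
    filter_upwards [self_mem_nhdsWithin] with l (hl : 0 < l)
  exacts [(tsum_mul_comp_mul_mem_Icc hH hH0 hint hl).1,
    (tsum_mul_comp_mul_mem_Icc hH hH0 hint hl).2]

theorem tendsto_mul_comp_mul_nhdsGT_zero (hH : AntitoneOn H (Ioi 0))
    (hH0 : ∀ x ∈ Ioi 0, 0 ≤ H x) (hint : IntegrableOn H (Ioi 0)) (k : ℕ) :
    Tendsto (fun l => l * H (l * (k + 1))) (𝓝[>] 0) (𝓝 0) := by
  refine tendsto_of_tendsto_of_tendsto_of_le_of_le' tendsto_const_nhds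
    (tendsto_intervalIntegral_zero_nhdsGT_zero hint) ?_ ?_ <;>
    filter_upwards [self_mem_nhdsWithin] with l (hl : 0 < l)
  · exact mul_nonneg hl.le (hH0 _ (mem_Ioi.2 (by positivity)))
  · refine le_trans ?_ (mul_le_integral_of_antitoneOn hH (hint.mono_set Ioc_subset_Ioi_self) hl)
    exact mul_le_mul_of_nonneg_left
      (hH hl (mem_Ioi.2 (by positivity)) (le_mul_of_one_le_right hl.le (by simp))) hl.le

end RiemannSum

section WeightedSum

theorem Summable.mul_of_nonneg_of_abs_le {β : Type*} {w g : β → ℝ} (hw0 : ∀ k, 0 ≤ w k)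
    (hw : Summable w) {B : ℝ} (hB : ∀ k, |g k| ≤ B) : Summable fun k => w k * g k :=
  hw.mul_right B |>.of_norm_bounded fun k => by
    rw [Real.norm_eq_abs, abs_mul, abs_of_nonneg (hw0 k)]
    exact mul_le_mul_of_nonneg_left (hB k) (hw0 k)

theorem abs_tsum_mul_le {w g : ℕ → ℝ} (hw0 : ∀ k, 0 ≤ w k) (hw : Summable w) {B δ : ℝ} {N : ℕ}
    (hB : ∀ k, |g k| ≤ B) (hδ : ∀ k, N ≤ k → |g k| ≤ δ) :
    |∑' k, w k * g k| ≤ B * ∑ k ∈ Finset.range N, w k + δ * ∑' k, w k := by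
  have habs : Summable fun k => w k * |g k| :=
    hw.mul_of_nonneg_of_abs_le hw0 (B := B) fun k => (abs_abs (g k)).trans_le (hB k)
  have hδ0 : 0 ≤ δ := (abs_nonneg _).trans (hδ N le_rfl)
  have hhead : ∑ k ∈ Finset.range N, w k * |g k| ≤ B * ∑ k ∈ Finset.range N, w k := by
    rw [Finset.mul_sum]
    exact Finset.sum_le_sum fun k _ => by nlinarith [hB k, hw0 k]
  have htail : ∑' k, w (k + N) * |g (k + N)| ≤ δ * ∑' k, w k := by
    calc ∑' k, w (k + N) * |g (k + N)| ≤ ∑' k, δ * w (k + N) :=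
          Summable.tsum_le_tsum (fun k => by nlinarith [hδ (k + N) (by omega), hw0 (k + N)])
            ((summable_nat_add_iff N).2 habs) (((summable_nat_add_iff N).2 hw).mul_left δ)
      _ ≤ δ * ∑' k, w k := by
          rw [tsum_mul_left]
          refine mul_le_mul_of_nonneg_left ?_ hδ0
          rw [← hw.sum_add_tsum_nat_add N]
          exact le_add_of_nonneg_left (Finset.sum_nonneg fun k _ => hw0 k)
  have hnorm : ∀ k, ‖w k * g k‖ = w k * |g k| := fun k => by
    rw [Real.norm_eq_abs, abs_mul, abs_of_nonneg (hw0 k)]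
  calc |∑' k, w k * g k| ≤ ∑' k, ‖w k * g k‖ :=
        norm_tsum_le_tsum_norm (habs.congr fun k => (hnorm k).symm)
    _ = ∑' k, w k * |g k| := tsum_congr hnorm
    _ = ∑ k ∈ Finset.range N, w k * |g k| + ∑' k, w (k + N) * |g (k + N)| :=
        (habs.sum_add_tsum_nat_add N).symm
    _ ≤ B * ∑ k ∈ Finset.range N, w k + δ * ∑' k, w k := add_le_add hhead htail

variable {ι : Type*} {L : Filter ι} {w : ι → ℕ → ℝ} {g : ℕ → ℝ} {S : ℝ}

theorem tendsto_tsum_mul_of_tendsto_zero (hw0 : ∀ᶠ t in L, ∀ k, 0 ≤ w t k)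
    (hw : ∀ᶠ t in L, Summable (w t)) (hwk : ∀ k, Tendsto (w · k) L (𝓝 0))
    (hS : Tendsto (fun t => ∑' k, w t k) L (𝓝 S)) (hg : Tendsto g atTop (𝓝 0)) :
    Tendsto (fun t => ∑' k, w t k * g k) L (𝓝 0) := by
  obtain ⟨B, hB⟩ := hg.abs.bddAbove_range
  rw [Metric.tendsto_nhds]
  intro ε hε
  set δ := ε / (2 * (|S| + 1))
  have hδ : 0 < δ := by positivity
  obtain ⟨N, hN⟩ := Metric.tendsto_atTop.1 hg δ hδ
  have hhead : Tendsto (fun t => B * ∑ k ∈ Finset.range N, w t k) L (𝓝 0) := by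
    simpa using (tendsto_finsetSum _ fun k _ => hwk k).const_mul B
  have hmass : ∀ᶠ t in L, ∑' k, w t k < |S| + 1 :=
    hS.eventually (gt_mem_nhds (by linarith [le_abs_self S]))
  filter_upwards [hw0, hw, hhead.eventually (gt_mem_nhds (half_pos hε)), hmass]
    with t ht0 ht hhead_t hmass_t
  rw [Real.dist_eq, sub_zero]
  calc |∑' k, w t k * g k|
      ≤ B * ∑ k ∈ Finset.range N, w t k + δ * ∑' k, w t k :=
        abs_tsum_mul_le ht0 ht (fun k => hB (mem_range_self k))
          fun k hk => by simpa using (hN k hk).le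
    _ < ε / 2 + δ * (|S| + 1) := by gcongr
    _ = ε := by simp only [δ]; field_simp; ring

theorem tendsto_tsum_mul_of_tendsto {c : ℝ} (hw0 : ∀ᶠ t in L, ∀ k, 0 ≤ w t k)
    (hw : ∀ᶠ t in L, Summable (w t)) (hwk : ∀ k, Tendsto (w · k) L (𝓝 0))
    (hS : Tendsto (fun t => ∑' k, w t k) L (𝓝 S)) (hg : Tendsto g atTop (𝓝 c)) :
    Tendsto (fun t => ∑' k, w t k * g k) L (𝓝 (S * c)) := by
  have hgc : Tendsto (fun k => g k - c) atTop (𝓝 0) := by simpa using hg.sub_const c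
  obtain ⟨B, hB⟩ := hgc.abs.bddAbove_range
  have := (tendsto_tsum_mul_of_tendsto_zero hw0 hw hwk hS hgc).add (hS.mul_const c)
  rw [zero_add] at this
  refine this.congr' ?_
  filter_upwards [hw0, hw] with t ht0 ht
  rw [← tsum_mul_right, ← Summable.tsum_add
    (ht.mul_of_nonneg_of_abs_le ht0 fun k => hB (mem_range_self k)) (ht.mul_right c)]
  exact tsum_congr fun k => by ring

end WeightedSum

noncomputable def expDivSqrt (x : ℝ) : ℝ := Real.exp (-x) / √x

theorem expDivSqrt_nonneg (x : ℝ) : 0 ≤ expDivSqrt x :=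
  div_nonneg (Real.exp_pos _).le (Real.sqrt_nonneg _)

theorem antitoneOn_expDivSqrt : AntitoneOn expDivSqrt (Ioi 0) := fun _ hx _ _ hxy =>
  div_le_div₀ (Real.exp_pos _).le (Real.exp_le_exp.2 (neg_le_neg hxy)) (Real.sqrt_pos.2 hx)
    (Real.sqrt_le_sqrt hxy)

theorem eqOn_gammaIntegrand_half_expDivSqrt :
    EqOn (fun x => Real.exp (-x) * x ^ ((1 / 2 : ℝ) - 1)) expDivSqrt (Ioi 0) := fun x hx => by
  dsimp only
  rw [expDivSqrt, show (1 / 2 - 1 : ℝ) = -(1 / 2) by norm_num, Real.rpow_neg (le_of_lt hx),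
    ← Real.sqrt_eq_rpow, div_eq_mul_inv]

theorem integrableOn_expDivSqrt : IntegrableOn expDivSqrt (Ioi 0) :=
  (Real.GammaIntegral_convergent one_half_pos).congr_fun eqOn_gammaIntegrand_half_expDivSqrt
    measurableSet_Ioi

theorem integral_expDivSqrt : ∫ x in Ioi 0, expDivSqrt x = √Real.pi := by
  rw [← Real.Gamma_one_half_eq, Real.Gamma_eq_integral one_half_pos]
  exact (setIntegral_congr_fun measurableSet_Ioi eqOn_gammaIntegrand_half_expDivSqrt).symm

theorem sqrt_mul_exp_mul_eq {l x : ℝ} (hl : 0 < l) (hx : 0 < x) (y : ℝ) :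
    √l * (Real.exp (-l * x) * y) = l * expDivSqrt (l * x) * (√x * y) := by
  have hsx : √x ≠ 0 := (Real.sqrt_pos.2 hx).ne'
  have hsl : √l ≠ 0 := (Real.sqrt_pos.2 hl).ne'
  rw [expDivSqrt, Real.sqrt_mul hl.le, neg_mul]
  field_simp
  rw [Real.sq_sqrt hl.le]

section LaplaceTransform

variable {a : ℕ → ℝ} {c : ℝ}

theorem tendsto_sqrt_mul_tsum_exp_mul
    (ha : Tendsto (fun k : ℕ => √(k + 1) * a k) atTop (𝓝 c)) :
    Tendsto (fun l => √l * ∑' k : ℕ, Real.exp (-l * (k + 1)) * a k) (𝓝[>] 0)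
      (𝓝 (√Real.pi * c)) := by
  have hH0 : ∀ x ∈ Ioi (0 : ℝ), 0 ≤ expDivSqrt x := fun x _ => expDivSqrt_nonneg x
  rw [← integral_expDivSqrt]
  refine (tendsto_tsum_mul_of_tendsto ?_ ?_
    (tendsto_mul_comp_mul_nhdsGT_zero antitoneOn_expDivSqrt hH0 integrableOn_expDivSqrt)
    (tendsto_tsum_mul_comp_mul antitoneOn_expDivSqrt hH0 integrableOn_expDivSqrt) ha).congr'
      ?_ <;>
    filter_upwards [self_mem_nhdsWithin] with l (hl : 0 < l)
  · exact fun k => mul_nonneg hl.le (expDivSqrt_nonneg _)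
  · exact summable_mul_comp_mul antitoneOn_expDivSqrt hH0
      (integrableOn_expDivSqrt.mono_set (Ioi_subset_Ioi hl.le)) hl
  · rw [← tsum_mul_left]
    exact tsum_congr fun k => (sqrt_mul_exp_mul_eq hl (by positivity) (a k)).symm

theorem summable_exp_mul (ha : Tendsto (fun k : ℕ => √(k + 1) * a k) atTop (𝓝 c)) {l : ℝ}
    (hl : 0 < l) : Summable fun k : ℕ => Real.exp (-l * (k + 1)) * a k := by
  obtain ⟨B, hB⟩ := ha.abs.bddAbove_range
  have hw := summable_mul_comp_mul antitoneOn_expDivSqrt (fun x _ => expDivSqrt_nonneg x)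
    (integrableOn_expDivSqrt.mono_set (Ioi_subset_Ioi hl.le)) hl
  refine ((hw.mul_of_nonneg_of_abs_le (fun k => mul_nonneg hl.le (expDivSqrt_nonneg _))
    fun k => hB (mem_range_self k)).mul_left (√l)⁻¹).congr fun k => ?_
  rw [← sqrt_mul_exp_mul_eq hl (by positivity), inv_mul_cancel_left₀ (Real.sqrt_pos.2 hl).ne']

theorem antitoneOn_tsum_exp_mul (ha0 : ∀ k, 0 ≤ a k)
    (ha : ∀ l > 0, Summable fun k : ℕ => Real.exp (-l * (k + 1)) * a k) :
    AntitoneOn (fun l => ∑' k : ℕ, Real.exp (-l * (k + 1)) * a k) (Ioi 0) :=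
  fun l hl m hm hlm => (ha m hm).tsum_le_tsum (fun k => mul_le_mul_of_nonneg_right
    (Real.exp_le_exp.2 (by nlinarith [k.cast_nonneg (α := ℝ)])) (ha0 k)) (ha l hl)

end LaplaceTransform

theorem tendsto_nhdsGT_zero_of_antitoneOn {α : Type*} {L : Filter α} {F : ℝ → ℝ} {u : α → ℝ}
    (hF : AntitoneOn F (Ioi 0)) (hu : ∀ᶠ t in L, 0 < u t) (hFu : Tendsto (F ∘ u) L atTop) :
    Tendsto u L (𝓝[>] 0) := by
  refine tendsto_nhdsWithin_iff.2 ⟨tendsto_order.2 ⟨fun b hb => ?_, fun b hb => ?_⟩, hu⟩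
  · exact hu.mono fun t ht => hb.trans ht
  · filter_upwards [hu, hFu.eventually_gt_atTop (F b)] with t ht hFt
    by_contra! hbt
    exact (hF hb ht hbt).not_gt hFt

/-- If `f(k) ~ (2πk)^{-1/2}` and `λ(ε) > 0` solves
`ε ∑_{k≥1} e^{−λ(ε)k} f(k) = 1`, then `λ(ε) = ε²/2 + o(ε²)` as `ε → 0⁺`. -/
theorem pinning_lambda_asymptotics
    (f : ℕ → ℝ) (hf_nonneg : ∀ k, 0 ≤ f k)
    (hf : Tendsto (fun k : ℕ => Real.sqrt k * f k) atTop
      (𝓝 (Real.sqrt (2 * Real.pi))⁻¹))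
    (lam : ℝ → ℝ) (hlam_pos : ∀ ε : ℝ, 0 < ε → 0 < lam ε)
    (hlam : ∀ ε : ℝ, 0 < ε →
      ε * ∑' k : ℕ, Real.exp (-(lam ε) * ((k : ℝ) + 1)) * f (k + 1) = 1) :
    Tendsto (fun ε : ℝ => lam ε / ε ^ 2) (𝓝[>] 0) (𝓝 (1 / 2)) := by
  set F := fun l : ℝ => ∑' k : ℕ, Real.exp (-l * (k + 1)) * f (k + 1)
  have hf' : Tendsto (fun k : ℕ => √(k + 1) * f (k + 1)) atTop (𝓝 (√(2 * Real.pi))⁻¹) := by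
    simpa [Function.comp_def] using hf.comp (tendsto_add_atTop_nat 1)
  have hF_lam : ∀ᶠ ε in 𝓝[>] (0 : ℝ), F (lam ε) = ε⁻¹ := by
    filter_upwards [self_mem_nhdsWithin] with ε (hε : 0 < ε)
    exact eq_inv_of_mul_eq_one_right (hlam ε hε)
  have hlam_zero : Tendsto lam (𝓝[>] 0) (𝓝[>] 0) :=
    tendsto_nhdsGT_zero_of_antitoneOn
      (antitoneOn_tsum_exp_mul (fun k => hf_nonneg _) fun _ => summable_exp_mul hf')
      (eventually_nhdsWithin_of_forall hlam_pos)
      (tendsto_inv_nhdsGT_zero.congr' (hF_lam.mono fun _ h => h.symm))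
  have hsqrt : Tendsto (fun ε => √(lam ε) * ε⁻¹) (𝓝[>] 0) (𝓝 (√2)⁻¹) := by
    have hconst : √Real.pi * (√(2 * Real.pi))⁻¹ = (√2)⁻¹ := by
      rw [Real.sqrt_mul zero_le_two]
      field_simp
    rw [← hconst]
    exact ((tendsto_sqrt_mul_tsum_exp_mul hf').comp hlam_zero).congr'
      (hF_lam.mono fun ε h => by simp only [Function.comp, ← h]; rfl)
  rw [show (1 / 2 : ℝ) = ((√2)⁻¹) ^ 2 by rw [inv_pow, Real.sq_sqrt zero_le_two]; norm_num]
  refine (hsqrt.pow 2).congr' ?_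
  filter_upwards [self_mem_nhdsWithin] with ε (hε : 0 < ε)
  rw [mul_pow, Real.sq_sqrt (hlam_pos ε hε).le, inv_pow, div_eq_mul_inv]
end
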